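/- arXiv:2406.15120 — 3 statements merged into one kernel-verified Lean document; each statement's English description precedes it below -/
import Mathlib

section
/- Let A ∈ ℝ^{m×n}, U ∈ ℝ^{m×r}, V ∈ ℝ^{n×r} with m ≥ n ≥ r, and suppose rank(A) = rank(A + U Vᵀ) = n. Define X = [V, AᵀU] ∈ ℝ^{n×2r} and Y = [(A + U Vᵀ)ᵀ U, V] ∈ ℝ^{n×2r} (block column concatenations). Then the 2r×2r matrix I_{2r} + Yᵀ (AᵀA)⁻¹ X is invertible. -/
open Matrix

lemma aux_isUnit {n : ℕ} (B : Matrix (Fin n) (Fin n) ℝ) (h : B.rank = n) : IsUnit B := by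
  have hsurj : Function.Surjective B.mulVecLin := by
    rw [← LinearMap.range_eq_top]
    apply Submodule.eq_top_of_finrank_eq
    simpa [Matrix.rank] using h
  have hinj : Function.Injective B.mulVecLin :=
    (LinearMap.injective_iff_surjective).2 hsurj
  have hu : IsUnit B.mulVecLin := by
    rw [LinearMap.isUnit_iff_ker_eq_bot]
    exact LinearMap.ker_eq_bot.2 hinj
  have h2 := hu.map (LinearMap.toMatrixAlgEquiv' : ((Fin n → ℝ) →ₗ[ℝ] (Fin n → ℝ)) ≃ₐ[ℝ] _)
  have h3 : Matrix.toLin' B = B.mulVecLin := rfl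
  rw [LinearMap.toMatrixAlgEquiv'] at h2
  simpa [← h3, LinearMap.toMatrix'_toLin'] using h2

theorem small_matrix_invertible {m n r : ℕ} (hmn : n ≤ m) (hnr : r ≤ n)
    (A : Matrix (Fin m) (Fin n) ℝ) (U : Matrix (Fin m) (Fin r) ℝ)
    (V : Matrix (Fin n) (Fin r) ℝ)
    (hA : A.rank = n) (hAhat : (A + U * Vᵀ).rank = n) :
    IsUnit ((1 : Matrix (Fin r ⊕ Fin r) (Fin r ⊕ Fin r) ℝ) +
      (fromCols ((A + U * Vᵀ)ᵀ * U) V)ᵀ * (Aᵀ * A)⁻¹ * fromCols V (Aᵀ * U)) := by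
  set Ah := A + U * Vᵀ with hAh
  set G := Aᵀ * A with hGdef
  have hG : IsUnit G := aux_isUnit _ (by rw [hGdef, rank_transpose_mul_self]; exact hA)
  have hGh : IsUnit (Ahᵀ * Ah) := aux_isUnit _ (by rw [rank_transpose_mul_self]; exact hAhat)
  have hGdet : IsUnit G.det := (isUnit_iff_isUnit_det _).1 hG
  have hXY : fromCols V (Aᵀ * U) * (fromCols (Ahᵀ * U) V)ᵀ = Ahᵀ * Ah - G := by
    rw [transpose_fromCols, fromCols_mul_fromRows, hAh, hGdef]
    simp only [transpose_mul, transpose_add, transpose_transpose, Matrix.add_mul,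
      Matrix.mul_add, Matrix.mul_assoc]
    abel
  rw [isUnit_iff_isUnit_det, Matrix.mul_assoc, det_one_add_mul_comm, Matrix.mul_assoc, hXY,
    Matrix.mul_sub, Matrix.nonsing_inv_mul _ hGdet]
  have : (1 : Matrix (Fin n) (Fin n) ℝ) + (G⁻¹ * (Ahᵀ * Ah) - 1) = G⁻¹ * (Ahᵀ * Ah) := by abel
  rw [this, det_mul]
  exact (isUnit_nonsing_inv_det _ hGdet).mul ((isUnit_iff_isUnit_det _).1 hGh)
end

section
/- Let A ∈ ℝ^{m×n}, U ∈ ℝ^{m×r}, V ∈ ℝ^{n×r} with m ≥ n ≥ r, and assume rank(A) = rank(A + U Vᵀ) = n. Then ((A + U Vᵀ)ᵀ(A + U Vᵀ))⁻¹ = (I − M)(AᵀA)⁻¹, where M = (AᵀA)⁻¹ X (I_{2r} + Yᵀ (AᵀA)⁻¹ X)⁻¹ Yᵀ with X = [V, AᵀU] and Y = [(A + U Vᵀ)ᵀ U, V]. -/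
/-! Expanding the product shows that the Gram matrix of `A + U Vᵀ` is the rank-`2r` update
`AᵀA + X Yᵀ` of the Gram matrix of `A`. Full column rank makes both Gram matrices invertible,
and then the Woodbury identity (with `C = 1`) inverts the update. -/

open Matrix

namespace Matrix

section Field

variable {K ι : Type*} [Field K] [Fintype ι] [DecidableEq ι]

theorem isUnit_of_rank_eq_card {B : Matrix ι ι K} (h : B.rank = Fintype.card ι) : IsUnit B := by
  rw [← mulVec_surjective_iff_isUnit, ← coe_mulVecLin, ← LinearMap.range_eq_top]
  apply Submodule.eq_top_of_finrank_eq
  rwa [Module.finrank_fintype_fun_eq_card]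

theorem isUnit_transpose_mul_self_of_rank_eq_card [LinearOrder K] [IsStrictOrderedRing K]
    {l : Type*} [Fintype l] {A : Matrix l ι K} (h : A.rank = Fintype.card ι) :
    IsUnit (Aᵀ * A) :=
  isUnit_of_rank_eq_card (by rw [rank_transpose_mul_self, h])

end Field

section Woodbury

variable {α m n : Type*} [CommRing α] [Fintype m] [DecidableEq m] [Fintype n] [DecidableEq n]
  {G : Matrix n n α} (X : Matrix n m α) (Y : Matrix m n α)

/-- By Sylvester's determinant identity,
`det (1 + Y G⁻¹ X) = det (1 + G⁻¹ X Y) = det G⁻¹ * det (G + X Y)`. -/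
theorem isUnit_one_add_mul_inv_mul (hG : IsUnit G) (hGXY : IsUnit (G + X * Y)) :
    IsUnit (1 + Y * G⁻¹ * X) := by
  have hGdet : IsUnit G.det := (isUnit_iff_isUnit_det G).mp hG
  have hfactor : 1 + G⁻¹ * (X * Y) = G⁻¹ * (G + X * Y) := by
    rw [Matrix.mul_add, nonsing_inv_mul G hGdet]
  rw [isUnit_iff_isUnit_det, Matrix.mul_assoc, det_one_add_mul_comm, Matrix.mul_assoc,
    hfactor, det_mul]
  exact (isUnit_nonsing_inv_det G hGdet).mul ((isUnit_iff_isUnit_det _).mp hGXY)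

theorem inv_add_mul_eq_one_sub_mul_inv (hG : IsUnit G) (hGXY : IsUnit (G + X * Y)) :
    (G + X * Y)⁻¹ = (1 - G⁻¹ * X * (1 + Y * G⁻¹ * X)⁻¹ * Y) * G⁻¹ := by
  have hwoodbury := add_mul_mul_inv_eq_sub G X 1 Y hG isUnit_one
    (by simpa only [inv_one] using isUnit_one_add_mul_inv_mul X Y hG hGXY)
  rw [Matrix.mul_one, inv_one] at hwoodbury
  rw [hwoodbury, sub_mul, one_mul, Matrix.mul_assoc _ Y]

end Woodbury

theorem transpose_mul_self_add_mul_transpose {α l n r : Type*} [CommRing α] [Fintype l]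
    [Fintype n] [Fintype r] (A : Matrix l n α) (U : Matrix l r α) (V : Matrix n r α) :
    (A + U * Vᵀ)ᵀ * (A + U * Vᵀ) =
      Aᵀ * A + fromCols V (Aᵀ * U) * (fromCols ((A + U * Vᵀ)ᵀ * U) V)ᵀ := by
  rw [transpose_fromCols, fromCols_mul_fromRows]
  simp only [transpose_add, transpose_mul, transpose_transpose, Matrix.add_mul, Matrix.mul_add,
    Matrix.mul_assoc]
  abel

end Matrix

theorem gram_inverse_update_general {m n r : ℕ}
    (A : Matrix (Fin m) (Fin n) ℝ) (U : Matrix (Fin m) (Fin r) ℝ)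
    (V : Matrix (Fin n) (Fin r) ℝ)
    (hA : A.rank = n) (hAhat : (A + U * Vᵀ).rank = n)
    (X Y : Matrix (Fin n) (Fin r ⊕ Fin r) ℝ)
    (hX : X = fromCols V (Aᵀ * U))
    (hY : Y = fromCols ((A + U * Vᵀ)ᵀ * U) V)
    (M : Matrix (Fin n) (Fin n) ℝ)
    (hM : M = (Aᵀ * A)⁻¹ * X *
      ((1 : Matrix (Fin r ⊕ Fin r) (Fin r ⊕ Fin r) ℝ) + Yᵀ * (Aᵀ * A)⁻¹ * X)⁻¹ * Yᵀ) :
    ((A + U * Vᵀ)ᵀ * (A + U * Vᵀ))⁻¹ = (1 - M) * (Aᵀ * A)⁻¹ := by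
  have hgram : (A + U * Vᵀ)ᵀ * (A + U * Vᵀ) = Aᵀ * A + X * Yᵀ := by
    rw [hX, hY, transpose_mul_self_add_mul_transpose]
  have hG := isUnit_transpose_mul_self_of_rank_eq_card (hA.trans (Fintype.card_fin n).symm)
  have hGhat := isUnit_transpose_mul_self_of_rank_eq_card (hAhat.trans (Fintype.card_fin n).symm)
  rw [hgram] at hGhat ⊢
  rw [inv_add_mul_eq_one_sub_mul_inv X Yᵀ hG hGhat, hM]

theorem gram_inverse_update {m n r : ℕ} (hmn : n ≤ m) (hnr : r ≤ n)
    (A : Matrix (Fin m) (Fin n) ℝ) (U : Matrix (Fin m) (Fin r) ℝ)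
    (V : Matrix (Fin n) (Fin r) ℝ)
    (hA : A.rank = n) (hAhat : (A + U * Vᵀ).rank = n)
    (X Y : Matrix (Fin n) (Fin r ⊕ Fin r) ℝ)
    (hX : X = fromCols V (Aᵀ * U))
    (hY : Y = fromCols ((A + U * Vᵀ)ᵀ * U) V)
    (M : Matrix (Fin n) (Fin n) ℝ)
    (hM : M = (Aᵀ * A)⁻¹ * X *
      ((1 : Matrix (Fin r ⊕ Fin r) (Fin r ⊕ Fin r) ℝ) + Yᵀ * (Aᵀ * A)⁻¹ * X)⁻¹ * Yᵀ) :
    ((A + U * Vᵀ)ᵀ * (A + U * Vᵀ))⁻¹ = (1 - M) * (Aᵀ * A)⁻¹ :=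
  gram_inverse_update_general A U V hA hAhat X Y hX hY M hM
end

section
/- Let A ∈ ℝ^{m×n}, U ∈ ℝ^{m×r}, V ∈ ℝ^{n×r} with rank(A) = n, and suppose I_{2r} + Yᵀ (AᵀA)⁻¹ X is invertible, where X = [V, AᵀU] and Y = [(A + U Vᵀ)ᵀ U, V]. Then A + U Vᵀ has rank n. -/
open Matrix

lemma aux_isUnit_of_rank_eq {n : ℕ} (M : Matrix (Fin n) (Fin n) ℝ)
    (hM : M.rank = n) : IsUnit M := by
  rw [← mulVec_injective_iff_isUnit]
  change Function.Injective M.mulVecLin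
  rw [← LinearMap.ker_eq_bot]
  have hr : LinearMap.range M.mulVecLin = ⊤ := by
    apply Submodule.eq_top_of_finrank_eq
    simpa [Matrix.rank] using hM
  rw [LinearMap.ker_eq_bot]
  exact (LinearMap.injective_iff_surjective).mpr
    (LinearMap.range_eq_top.mp hr)

theorem full_rank_of_small_invertible {m n r : ℕ}
    (A : Matrix (Fin m) (Fin n) ℝ) (U : Matrix (Fin m) (Fin r) ℝ)
    (V : Matrix (Fin n) (Fin r) ℝ)
    (hA : A.rank = n)
    (h : IsUnit ((1 : Matrix (Fin r ⊕ Fin r) (Fin r ⊕ Fin r) ℝ) +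
      (fromCols ((A + U * Vᵀ)ᵀ * U) V)ᵀ * (Aᵀ * A)⁻¹ * fromCols V (Aᵀ * U))) :
    (A + U * Vᵀ).rank = n := by
  set B := A + U * Vᵀ with hB
  set X := fromCols V (Aᵀ * U) with hX
  set Y := fromCols (Bᵀ * U) V with hY
  have hAtA : IsUnit (Aᵀ * A) := by
    apply aux_isUnit_of_rank_eq
    rw [Matrix.rank_transpose_mul_self, hA]
  have hGram : Bᵀ * B = Aᵀ * A + X * Yᵀ := by
    rw [hX, hY, transpose_fromCols, fromCols_mul_fromRows]
    rw [hB]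
    simp only [Matrix.transpose_add, Matrix.transpose_mul, Matrix.transpose_transpose]
    simp only [Matrix.add_mul, Matrix.mul_add, Matrix.mul_assoc]
    abel
  have key : Bᵀ * B = (Aᵀ * A) * (1 + (Aᵀ * A)⁻¹ * (X * Yᵀ)) := by
    rw [hGram, mul_add, mul_one, ← Matrix.mul_assoc,
      Matrix.mul_nonsing_inv _ ((Matrix.isUnit_iff_isUnit_det _).mp hAtA),
      Matrix.one_mul]
  have h2 : IsUnit (1 + (Aᵀ * A)⁻¹ * X * Yᵀ) := by
    rw [Matrix.isUnit_iff_isUnit_det, Matrix.det_one_add_mul_comm]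
    rw [Matrix.isUnit_iff_isUnit_det] at h
    convert h using 3
    rw [Matrix.mul_assoc]
  have hU : IsUnit (Bᵀ * B) := by
    rw [key]
    exact hAtA.mul (by rwa [Matrix.mul_assoc] at h2)
  have := Matrix.rank_of_isUnit _ hU
  rw [Matrix.rank_transpose_mul_self] at this
  simpa using this
end
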